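/- Let Λ be a row-finite k-graph with no sources, and suppose μ, ν ∈ Λ satisfy s(μ) = s(ν) and μ ∼ ν. Then MCE(μ,ν) = μΛ ∩ Λ^{d(μ)∨d(ν)} = νΛ ∩ Λ^{d(μ)∨d(ν)}. -/

import Mathlib

open scoped BigOperators

/-- A `k`-graph: a countable category with degree functor `d : Λ → ℕ^k`
satisfying the factorisation property.  Composition `comp μ ν` is only
meaningful when `s μ = r ν`. -/
structure KGraph (k : ℕ) where
  Path : Type
  countable : Countable Path
  r : Path → Path
  s : Path → Path
  d : Path → (Fin k → ℕ)
  comp : Path → Path → Path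
  d_r : ∀ l, d (r l) = 0
  d_s : ∀ l, d (s l) = 0
  r_of_vertex : ∀ v, d v = 0 → r v = v
  s_of_vertex : ∀ v, d v = 0 → s v = v
  id_comp : ∀ l, comp (r l) l = l
  comp_id : ∀ l, comp l (s l) = l
  r_comp : ∀ μ ν, s μ = r ν → r (comp μ ν) = r μ
  s_comp : ∀ μ ν, s μ = r ν → s (comp μ ν) = s ν
  d_comp : ∀ μ ν, s μ = r ν → d (comp μ ν) = d μ + d ν
  comp_assoc : ∀ l μ ν, s l = r μ → s μ = r ν →
    comp (comp l μ) ν = comp l (comp μ ν)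
  factor : ∀ (l : Path) (m n : Fin k → ℕ), d l = m + n →
    ∃! p : Path × Path, d p.1 = m ∧ d p.2 = n ∧ s p.1 = r p.2 ∧ comp p.1 p.2 = l

namespace KGraph

variable {k : ℕ} (G : KGraph k)

def IsVertex (v : G.Path) : Prop := G.d v = 0

/-- `MCE μ ν = μΛ ∩ νΛ ∩ Λ^{d μ ⊔ d ν}`. -/
def MCE (μ ν : G.Path) : Set G.Path :=
  {l | G.d l = G.d μ ⊔ G.d ν ∧
      (∃ α, G.s μ = G.r α ∧ G.comp μ α = l) ∧
      (∃ β, G.s ν = G.r β ∧ G.comp ν β = l)}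

def FinitelyAligned : Prop := ∀ μ ν : G.Path, (G.MCE μ ν).Finite

/-- `Ext(μ; E) = ⋃_{ν ∈ E} {α : μα ∈ MCE(μ,ν)}`. -/
def Ext (μ : G.Path) (E : Set G.Path) : Set G.Path :=
  {α | G.s μ = G.r α ∧ ∃ ν ∈ E, G.comp μ α ∈ G.MCE μ ν}

/-- `Ext` computed relative to a sub-`k`-graph with path set `W`. -/
def ExtIn (W : Set G.Path) (μ : G.Path) (E : Set G.Path) : Set G.Path :=
  {α | G.s μ = G.r α ∧ ∃ ν ∈ E, G.comp μ α ∈ G.MCE μ ν ∩ W}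

/-- `E` is exhaustive at `v` relative to the sub-`k`-graph with path set `W`. -/
def ExhaustiveIn (W : Set G.Path) (v : G.Path) (E : Set G.Path) : Prop :=
  ∀ l ∈ W, G.r l = v → ∃ μ ∈ E, (G.MCE l μ ∩ W).Nonempty

def Exhaustive (v : G.Path) (E : Set G.Path) : Prop := G.ExhaustiveIn Set.univ v E

/-- Membership in `FE` of the sub-`k`-graph with path set `W`. -/
def IsFEIn (W : Set G.Path) (E : Set G.Path) : Prop :=
  E.Finite ∧ E ⊆ W ∧ (∀ μ ∈ E, ¬ G.IsVertex μ) ∧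
    ∃ v, G.IsVertex v ∧ (∀ μ ∈ E, G.r μ = v) ∧ G.ExhaustiveIn W v E

def IsFE (E : Set G.Path) : Prop := G.IsFEIn Set.univ E

/-- A satiated collection of finite exhaustive sets, relative to the sub-`k`-graph `W`. -/
def SatiatedIn (W : Set G.Path) (Ε : Set (Set G.Path)) : Prop :=
  (∀ E ∈ Ε, G.IsFEIn W E) ∧
  ∀ F ∈ Ε, ∀ v, G.IsVertex v → (∀ μ ∈ F, G.r μ = v) →
    ((∀ l ∈ W, G.r l = v → l ≠ v → insert l F ∈ Ε) ∧
     (∀ l ∈ W, G.r l = v →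
        (¬ ∃ μ ∈ F, ∃ μ', G.s μ = G.r μ' ∧ G.comp μ μ' = l) →
        G.ExtIn W l F ∈ Ε) ∧
     (∀ lam lam', lam ∈ F → G.s lam = G.r lam' → G.comp lam lam' ∈ F →
        lam' ≠ G.s lam → F \ {G.comp lam lam'} ∈ Ε) ∧
     (∀ lam ∈ F, ∀ Gs ∈ Ε, (∀ μ ∈ Gs, G.r μ = G.s lam) →
        ((F \ {lam}) ∪ (G.comp lam) '' Gs) ∈ Ε))

def Satiated (Ε : Set (Set G.Path)) : Prop := G.SatiatedIn Set.univ Ε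

end KGraph

/-- A normalised `𝕋`-valued categorical `2`-cocycle on a `k`-graph, with the
circle realised as the norm-one complex numbers. -/
structure KGraph.Cocycle {k : ℕ} (G : KGraph k) where
  c : G.Path → G.Path → ℂ
  norm_one : ∀ μ ν, G.s μ = G.r ν → ‖c μ ν‖ = 1
  cocycle : ∀ l μ ν, G.s l = G.r μ → G.s μ = G.r ν →
    c l μ * c (G.comp l μ) ν = c μ ν * c l (G.comp μ ν)
  left_id : ∀ l, c (G.r l) l = 1
  right_id : ∀ l, c l (G.s l) = 1

namespace KGraph

variable {k : ℕ} (G : KGraph k)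

section CStar

variable {A : Type*} [NonUnitalNormedRing A] [StarRing A] [CStarRing A]
  [NormedSpace ℂ A] [IsScalarTower ℂ A A] [SMulCommClass ℂ A A]
  [StarModule ℂ A] [CompleteSpace A]

/-- Toeplitz–Cuntz–Krieger `(Λ, c)`-family. -/
def IsTCK (σ : G.Cocycle) (t : G.Path → A) : Prop :=
  (∀ v, G.IsVertex v → star (t v) = t v ∧ t v * t v = t v) ∧
  (∀ v w, G.IsVertex v → G.IsVertex w → v ≠ w → t v * t w = 0) ∧
  (∀ μ ν, G.s μ = G.r ν → t μ * t ν = σ.c μ ν • t (G.comp μ ν)) ∧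
  (∀ l, star (t l) * t l = t (G.s l)) ∧
  (∀ μ ν (F : Finset G.Path), (F : Set G.Path) = G.MCE μ ν →
    (t μ * star (t μ)) * (t ν * star (t ν)) = ∑ l ∈ F, t l * star (t l))

open scoped Classical in
/-- `Δ(t)^F = ∏_{l ∈ F} (q_v - q_l)`; the factors commute for a TCK family, so the
`noncommProd` below is the product from the paper.  The product is computed in the
unitization (with a harmless prefactor `q_v`, which acts as the identity on each
factor for a TCK family with `F ⊆ vΛ`), so that the empty product is `q_v`. -/
noncomputable def Delta (t : G.Path → A) (v : G.Path) (F : Finset G.Path) : A :=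
  if h : (F : Set G.Path).Pairwise (Function.onFun Commute fun l =>
      ((t v * star (t v) - t l * star (t l) : A) : Unitization ℂ A))
  then (((t v * star (t v) : A) : Unitization ℂ A) *
      F.noncommProd (fun l => ((t v * star (t v) - t l * star (t l) : A) : Unitization ℂ A)) h).snd
  else 0

/-- Relative Cuntz–Krieger `(Λ, c; Ε)`-family. -/
def IsRelCK (σ : G.Cocycle) (Ε : Set (Set G.Path)) (t : G.Path → A) : Prop :=
  G.IsTCK σ t ∧ ∀ (F : Finset G.Path) (v : G.Path), (F : Set G.Path) ∈ Ε →
    G.IsVertex v → (∀ μ ∈ F, G.r μ = v) → G.Delta t v F = 0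

/-- Cuntz–Krieger `(Λ, c)`-family (finitely aligned case). -/
def IsCK (σ : G.Cocycle) (t : G.Path → A) : Prop :=
  G.IsRelCK σ {E | G.IsFE E} t

/-- The `C*`-subalgebra of `A` generated by a family `t`, as a subset of `A`. -/
def cstarOf (t : G.Path → A) : Set A :=
  closure (↑(NonUnitalStarAlgebra.adjoin ℂ (Set.range t)) : Set A)

end CStar

/-- Row-finite with no sources: every `vΛ^n` is finite and nonempty. -/
def RowFiniteNoSources : Prop :=
  ∀ v, G.IsVertex v → ∀ n : Fin k → ℕ,
    {l | G.r l = v ∧ G.d l = n}.Finite ∧ {l | G.r l = v ∧ G.d l = n}.Nonempty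

section CStar2

variable {A : Type*} [NonUnitalNormedRing A] [StarRing A] [CStarRing A]
  [NormedSpace ℂ A] [IsScalarTower ℂ A A] [SMulCommClass ℂ A A]
  [StarModule ℂ A] [CompleteSpace A]

/-- Cuntz–Krieger family, row-finite no sources formulation:
`∑_{λ ∈ vΛ^n} t_λ t_λ* = t_v`. -/
def IsCKrf (σ : G.Cocycle) (t : G.Path → A) : Prop :=
  G.IsTCK σ t ∧ ∀ v (n : Fin k → ℕ) (F : Finset G.Path), G.IsVertex v →
    (F : Set G.Path) = {l | G.r l = v ∧ G.d l = n} →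
    ∑ l ∈ F, t l * star (t l) = t v

end CStar2

/-- A filter in a `k`-graph. -/
def IsFilter (S : Set G.Path) : Prop :=
  (∀ l, (∃ α, G.s l = G.r α ∧ G.comp l α ∈ S) → l ∈ S) ∧
  (∀ μ ∈ S, ∀ ν ∈ S, (G.MCE μ ν ∩ S).Nonempty)

/-- An ultrafilter: a filter meeting every `Λ^n`. -/
def IsUltrafilter (S : Set G.Path) : Prop :=
  G.IsFilter S ∧ ∀ n : Fin k → ℕ, ∃ l ∈ S, G.d l = n

/-- `ℓ_μ(S) = {ν : νΛ ∩ μS ≠ ∅}`. -/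
def lmap (μ : G.Path) (S : Set G.Path) : Set G.Path :=
  {ν | ∃ τ ∈ S, G.s μ = G.r τ ∧ ∃ α, G.s ν = G.r α ∧ G.comp ν α = G.comp μ τ}

/-- `μ ∼ ν`: `ℓ_μ(S) = ℓ_ν(S)` for every ultrafilter `S` with `r(S) = s(μ)`. -/
def PEquiv (μ ν : G.Path) : Prop :=
  ∀ S, G.IsUltrafilter S → G.s μ ∈ S → G.lmap μ S = G.lmap ν S

/-- `d` with values in `ℤ^k`. -/
def dZ (l : G.Path) : Fin k → ℤ := fun i => (G.d l i : ℤ)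

/-- `Per(Λ) ≤ ℤ^k`, generated by `{d(μ) - d(ν) : μ ∼ ν}`. -/
def PerGroup : AddSubgroup (Fin k → ℤ) :=
  AddSubgroup.closure
    {m | ∃ μ ν, G.s μ = G.s ν ∧ G.PEquiv μ ν ∧ m = G.dZ μ - G.dZ ν}

/-- The hereditary set `H_Per`. -/
def HPer : Set G.Path :=
  {v | G.IsVertex v ∧ ∀ m n : Fin k → ℕ,
    ((fun i => (m i : ℤ)) - fun i => (n i : ℤ)) ∈ G.PerGroup →
    ∀ l, G.r l = v → G.d l = m →
      ∃ μ, G.r μ = v ∧ G.d μ = n ∧ G.s μ = G.s l ∧ G.PEquiv l μ}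

end KGraph

/-!
Write `x ≼ y` (`IsPrefix x y`) when `y = x a` for some `a`. If `l = μα`, extend `α` by a path
of degree `(1, …, 1)` again and again; the prefixes of this infinite path form an ultrafilter
`S` containing `α`, with `r(S) = s(μ)`. Since `ν ∈ ℓ_ν(S) = ℓ_μ(S)`, we get `ν ≼ μτ` for some
`τ ∈ S`, and a common extension `ρ ∈ S` of `τ` and `α` gives `ν ≼ μρ` and `l = μα ≼ μρ`.
As `d(ν) ≤ d(l)`, unique factorisation of `μρ` forces `ν ≼ l`.
-/

namespace KGraph

variable {k : ℕ} {G : KGraph k}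

variable (G) in
def IsPrefix (x y : G.Path) : Prop := ∃ a, G.s x = G.r a ∧ G.comp x a = y

lemma isPrefix_comp {x a : G.Path} (h : G.s x = G.r a) : G.IsPrefix x (G.comp x a) :=
  ⟨a, h, rfl⟩

lemma isPrefix_refl (x : G.Path) : G.IsPrefix x x :=
  ⟨G.s x, (G.r_of_vertex _ (G.d_s x)).symm, G.comp_id x⟩

lemma r_isPrefix (x : G.Path) : G.IsPrefix (G.r x) x :=
  ⟨x, G.s_of_vertex _ (G.d_r x), G.id_comp x⟩

namespace IsPrefix

variable {x y z : G.Path}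

lemma d_le (h : G.IsPrefix x y) : G.d x ≤ G.d y := by
  obtain ⟨a, ha, rfl⟩ := h
  rw [G.d_comp x a ha]
  exact le_self_add

lemma trans (hxy : G.IsPrefix x y) (hyz : G.IsPrefix y z) : G.IsPrefix x z := by
  obtain ⟨a, ha, rfl⟩ := hxy
  obtain ⟨b, hb, rfl⟩ := hyz
  have hab : G.s a = G.r b := (G.s_comp x a ha).symm.trans hb
  exact ⟨G.comp a b, (G.r_comp a b hab).symm ▸ ha, (G.comp_assoc x a b ha hab).symm⟩

lemma comp_left {μ : G.Path} (hμ : G.s μ = G.r x) (h : G.IsPrefix x y) :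
    G.IsPrefix (G.comp μ x) (G.comp μ y) := by
  obtain ⟨a, ha, rfl⟩ := h
  exact ⟨a, (G.s_comp μ x hμ).trans ha, G.comp_assoc μ x a hμ ha⟩

lemma eq_of_d_eq (hxz : G.IsPrefix x z) (hyz : G.IsPrefix y z) (h : G.d x = G.d y) :
    x = y := by
  obtain ⟨a, ha, rfl⟩ := hxz
  obtain ⟨b, hb, hz⟩ := hyz
  have hdab : G.d b = G.d a := by
    have := G.d_comp y b hb
    rw [hz, G.d_comp x a ha, h] at this
    exact (add_left_cancel this).symm
  have huniq := (G.factor (G.comp x a) (G.d x) (G.d a) (G.d_comp x a ha)).unique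
    (y₁ := (x, a)) (y₂ := (y, b)) ⟨rfl, rfl, ha, rfl⟩ ⟨h.symm, hdab, hb, hz⟩
  exact congrArg Prod.fst huniq

lemma of_d_le (hxz : G.IsPrefix x z) (hyz : G.IsPrefix y z) (h : G.d x ≤ G.d y) :
    G.IsPrefix x y := by
  obtain ⟨a, ha, rfl⟩ := hyz
  obtain ⟨⟨x', b⟩, hx', -, hx'b, hy⟩ :=
    (G.factor y (G.d x) (G.d y - G.d x) (add_tsub_cancel_of_le h).symm).exists
  have hx'y : G.IsPrefix x' y := hy ▸ isPrefix_comp hx'b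
  exact (eq_of_d_eq hxz (hx'y.trans (isPrefix_comp ha)) hx'.symm) ▸ hx'y

end IsPrefix

lemma exists_isPrefix_d_eq (y : G.Path) {m : Fin k → ℕ} (h : m ≤ G.d y) :
    ∃ x, G.IsPrefix x y ∧ G.d x = m := by
  obtain ⟨⟨x, a⟩, hx, -, hxa, hy⟩ :=
    (G.factor y m (G.d y - m) (add_tsub_cancel_of_le h).symm).exists
  exact ⟨x, ⟨a, hxa, hy⟩, hx⟩

lemma IsFilter.mem_of_isPrefix {S : Set G.Path} (hS : G.IsFilter S) {x y : G.Path}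
    (h : G.IsPrefix x y) (hy : y ∈ S) : x ∈ S := by
  obtain ⟨a, ha, rfl⟩ := h
  exact hS.1 x ⟨a, ha, hy⟩

lemma isUltrafilter_setOf_isPrefix (c : ℕ → G.Path)
    (hmono : ∀ ⦃m n⦄, m ≤ n → G.IsPrefix (c m) (c n))
    (hunbdd : ∀ m : Fin k → ℕ, ∃ n, m ≤ G.d (c n)) :
    G.IsUltrafilter {x | ∃ n, G.IsPrefix x (c n)} := by
  refine ⟨⟨?_, ?_⟩, ?_⟩
  · rintro x ⟨a, ha, n, hn⟩
    exact ⟨n, (isPrefix_comp ha).trans hn⟩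
  · rintro p ⟨m, hm⟩ q ⟨n, hn⟩
    have hp := hm.trans (hmono (le_max_left m n))
    have hq := hn.trans (hmono (le_max_right m n))
    obtain ⟨x, hx, hdx⟩ := exists_isPrefix_d_eq _ (sup_le hp.d_le hq.d_le)
    exact ⟨x, ⟨hdx, hp.of_d_le hx (hdx ▸ le_sup_left), hq.of_d_le hx (hdx ▸ le_sup_right)⟩,
      _, hx⟩
  · intro m
    obtain ⟨n, hn⟩ := hunbdd m
    obtain ⟨x, hx, hdx⟩ := exists_isPrefix_d_eq _ hn
    exact ⟨x, ⟨n, hx⟩, hdx⟩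

namespace RowFiniteNoSources

lemma exists_isPrefix_d_lt (hrf : G.RowFiniteNoSources) (x : G.Path) :
    ∃ y, G.IsPrefix x y ∧ ∀ i, G.d x i < G.d y i := by
  obtain ⟨ε, hε, hdε⟩ := (hrf (G.s x) (G.d_s x) 1).2
  refine ⟨G.comp x ε, isPrefix_comp hε.symm, fun i => ?_⟩
  simp [G.d_comp x ε hε.symm, hdε]

lemma exists_isPrefix_chain (hrf : G.RowFiniteNoSources) (α : G.Path) :
    ∃ c : ℕ → G.Path, c 0 = α ∧ (∀ ⦃m n⦄, m ≤ n → G.IsPrefix (c m) (c n)) ∧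
      ∀ m : Fin k → ℕ, ∃ n, m ≤ G.d (c n) := by
  choose next hnext hd using hrf.exists_isPrefix_d_lt
  have hsucc (n : ℕ) : next^[n + 1] α = next (next^[n] α) := Function.iterate_succ_apply' ..
  have hmono ⦃m n : ℕ⦄ (h : m ≤ n) : G.IsPrefix (next^[m] α) (next^[n] α) := by
    induction n, h using Nat.le_induction with
    | base => exact isPrefix_refl _
    | succ n _ ih => exact hsucc n ▸ ih.trans (hnext _)
  have hgrow (n : ℕ) (i : Fin k) : n ≤ G.d (next^[n] α) i := by
    induction n with
    | zero => exact Nat.zero_le _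
    | succ n ih => exact hsucc n ▸ ih.trans_lt (hd _ i)
  exact ⟨fun n => next^[n] α, rfl, hmono, fun m =>
    ⟨Finset.univ.sup m, fun i => (Finset.le_sup (Finset.mem_univ i)).trans (hgrow _ i)⟩⟩

lemma exists_isUltrafilter_mem (hrf : G.RowFiniteNoSources) (α : G.Path) :
    ∃ S, G.IsUltrafilter S ∧ α ∈ S := by
  obtain ⟨c, hc0, hmono, hunbdd⟩ := hrf.exists_isPrefix_chain α
  exact ⟨_, isUltrafilter_setOf_isPrefix c hmono hunbdd, 0, hc0 ▸ isPrefix_refl α⟩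

end RowFiniteNoSources

lemma mce_comm (μ ν : G.Path) : G.MCE μ ν = G.MCE ν μ := by
  ext l
  simp only [MCE, Set.mem_ofPred_eq, sup_comm, and_comm]

namespace PEquiv

variable {μ ν : G.Path}

lemma symm (hs : G.s μ = G.s ν) (hsim : G.PEquiv μ ν) : G.PEquiv ν μ :=
  fun S hS hν => (hsim S hS (hs ▸ hν)).symm

lemma isPrefix_of_isPrefix (hrf : G.RowFiniteNoSources) (hs : G.s μ = G.s ν)
    (hsim : G.PEquiv μ ν) {l : G.Path} (hμl : G.IsPrefix μ l) (hd : G.d ν ≤ G.d l) :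
    G.IsPrefix ν l := by
  obtain ⟨α, hμα, rfl⟩ := hμl
  obtain ⟨S, hS, hαS⟩ := hrf.exists_isUltrafilter_mem α
  have hμS : G.s μ ∈ S := hS.1.mem_of_isPrefix (hμα ▸ r_isPrefix α) hαS
  have hν : ν ∈ G.lmap μ S := by
    rw [hsim S hS hμS]
    exact ⟨G.s ν, hs ▸ hμS, (G.r_of_vertex _ (G.d_s ν)).symm,
      isPrefix_comp (G.r_of_vertex _ (G.d_s ν)).symm⟩
  obtain ⟨τ, hτS, hμτ, hντ : G.IsPrefix ν (G.comp μ τ)⟩ := hν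
  obtain ⟨ρ, ⟨-, hτρ : G.IsPrefix τ ρ, hαρ : G.IsPrefix α ρ⟩, -⟩ :=
    hS.1.2 τ hτS α hαS
  exact (hντ.trans (hτρ.comp_left hμτ)).of_d_le (hαρ.comp_left hμα) hd

lemma mce_eq (hrf : G.RowFiniteNoSources) (hs : G.s μ = G.s ν) (hsim : G.PEquiv μ ν) :
    G.MCE μ ν = {l | G.d l = G.d μ ⊔ G.d ν ∧ G.IsPrefix μ l} := by
  ext l
  refine ⟨fun h => ⟨h.1, h.2.1⟩, fun ⟨hd, hμl⟩ => ⟨hd, hμl, ?_⟩⟩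
  exact hsim.isPrefix_of_isPrefix hrf hs hμl (hd ▸ le_sup_right)

end PEquiv

end KGraph

/-- if `μ ∼ ν` then `MCE(μ,ν) = μΛ ∩ Λ^{dμ∨dν} = νΛ ∩ Λ^{dμ∨dν}`. -/
theorem stmt14 {k : ℕ} (G : KGraph k) (hrf : G.RowFiniteNoSources)
    (μ ν : G.Path) (hs : G.s μ = G.s ν) (hsim : G.PEquiv μ ν) :
    G.MCE μ ν =
      {l | G.d l = G.d μ ⊔ G.d ν ∧ ∃ α, G.s μ = G.r α ∧ G.comp μ α = l} ∧
    G.MCE μ ν =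
      {l | G.d l = G.d μ ⊔ G.d ν ∧ ∃ β, G.s ν = G.r β ∧ G.comp ν β = l} := by
  refine ⟨hsim.mce_eq hrf hs, ?_⟩
  rw [G.mce_comm, (hsim.symm hs).mce_eq hrf hs.symm, sup_comm]
  rfl
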